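/- Let (L, [·,·], φ_L, α) be a Hom-LieDer pair over K and let (V; ρ, β, φ_V) be a representation of it. Then (L ⊕ V, [·,·]_{L⊕V}, φ_L + φ_V, α + β) is a Hom-LieDer pair, where [(x, X), (y, Y)]_{L⊕V} = ([x, y], ρ(x)(Y) − ρ(y)(X)), (α + β)(x, X) = (α(x), β(X)) and (φ_L + φ_V)(x, X) = (φ_L(x), φ_V(X)) for x, y ∈ L and X, Y ∈ V (the semi-direct product of the Hom-LieDer pair and its representation). -/
import Mathlib


/-- A (multiplicative) Hom-LieDer pair: a skew-symmetric bilinear bracket `b`, a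
multiplicative structure map `α` satisfying Hom-Jacobi, and an `α`-derivation `φ`. -/
def IsHomLieDerPair {K : Type*} [Field K] {L : Type*} [AddCommGroup L] [Module K L]
    (b : L →ₗ[K] L →ₗ[K] L) (φ α : L →ₗ[K] L) : Prop :=
  (∀ x y, b x y = - b y x) ∧
  (∀ x y, α (b x y) = b (α x) (α y)) ∧
  (∀ x y z, b (α x) (b y z) + b (α y) (b z x) + b (α z) (b x y) = 0) ∧
  (∀ x y, φ (b x y) = b (φ x) (α y) + b (α x) (φ y))

/-- A representation (V; ρ, β, φ_V) of the Hom-LieDer pair (L, b, φ_L, α). -/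
def IsHomLieDerRep {K : Type*} [Field K] {L V : Type*}
    [AddCommGroup L] [Module K L] [AddCommGroup V] [Module K V]
    (b : L →ₗ[K] L →ₗ[K] L) (φL α : L →ₗ[K] L)
    (ρ : L →ₗ[K] V →ₗ[K] V) (β φV : V →ₗ[K] V) : Prop :=
  (∀ x, ρ (α x) ∘ₗ β = β ∘ₗ ρ x) ∧
  (∀ x y, ρ (b x y) ∘ₗ β = ρ (α x) ∘ₗ ρ y - ρ (α y) ∘ₗ ρ x) ∧
  (∀ x, φV ∘ₗ ρ x - ρ (α x) ∘ₗ φV = ρ (φL x) ∘ₗ β)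

/-- The semidirect-product bracket on L ⊕ V:
[(x,X),(y,Y)] = ([x,y], ρ(x)(Y) − ρ(y)(X)). -/
noncomputable def sdBracket {K : Type*} [Field K] {L V : Type*}
    [AddCommGroup L] [Module K L] [AddCommGroup V] [Module K V]
    (b : L →ₗ[K] L →ₗ[K] L) (ρ : L →ₗ[K] V →ₗ[K] V) :
    (L × V) →ₗ[K] (L × V) →ₗ[K] (L × V) :=
  LinearMap.mk₂ K (fun p q => (b p.1 q.1, ρ p.1 q.2 - ρ q.1 p.2))
    (fun p p' q => by simp [Prod.ext_iff]; abel)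
    (fun c p q => by simp [Prod.ext_iff, smul_sub])
    (fun p q q' => by simp [Prod.ext_iff]; abel)
    (fun c p q => by simp [Prod.ext_iff, smul_sub])

/-- The semi-direct product of a Hom-LieDer pair and a representation
of it is a Hom-LieDer pair. -/
theorem homLieDerPair_semidirect
    {K : Type*} [Field K] [CharZero K] {L V : Type*}
    [AddCommGroup L] [Module K L] [AddCommGroup V] [Module K V]
    (b : L →ₗ[K] L →ₗ[K] L) (φL α : L →ₗ[K] L)
    (ρ : L →ₗ[K] V →ₗ[K] V) (β φV : V →ₗ[K] V)
    (hpair : IsHomLieDerPair b φL α)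
    (hrep : IsHomLieDerRep b φL α ρ β φV) :
    IsHomLieDerPair (sdBracket b ρ) (φL.prodMap φV) (α.prodMap β) := by
  obtain ⟨hskew, hmul, hjac, hder⟩ := hpair
  obtain ⟨h1, h2, h3⟩ := hrep
  have h1' : ∀ x v, ρ (α x) (β v) = β (ρ x v) := fun x v => LinearMap.congr_fun (h1 x) v
  have h2' : ∀ x y v, ρ (b x y) (β v) = ρ (α x) (ρ y v) - ρ (α y) (ρ x v) := by
    intro x y v
    have := congrFun (congrArg DFunLike.coe (h2 x y)) v
    simpa using this
  have h3' : ∀ x v, φV (ρ x v) - ρ (α x) (φV v) = ρ (φL x) (β v) := by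
    intro x v
    have := congrFun (congrArg DFunLike.coe (h3 x)) v
    simpa using this
  refine ⟨?_, ?_, ?_, ?_⟩
  · rintro ⟨x, X⟩ ⟨y, Y⟩
    simp [sdBracket, Prod.ext_iff, hskew x y]
  · rintro ⟨x, X⟩ ⟨y, Y⟩
    simp [sdBracket, Prod.ext_iff, hmul x y, h1']
  · rintro ⟨x, X⟩ ⟨y, Y⟩ ⟨z, Z⟩
    simp only [sdBracket, LinearMap.mk₂_apply, LinearMap.prodMap_apply, Prod.mk_add_mk,
      Prod.ext_iff, Prod.fst_zero, Prod.snd_zero, map_sub]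
    constructor
    · exact hjac x y z
    · have e1 := h2' y z X
      have e2 := h2' z x Y
      have e3 := h2' x y Z
      rw [e1, e2, e3]
      abel
  · rintro ⟨x, X⟩ ⟨y, Y⟩
    simp only [sdBracket, LinearMap.mk₂_apply, LinearMap.prodMap_apply, Prod.mk_add_mk,
      Prod.ext_iff, map_sub]
    constructor
    · exact hder x y
    · have e1 := h3' x Y
      have e2 := h3' y X
      have : φV (ρ x Y) = ρ (α x) (φV Y) + ρ (φL x) (β Y) := by
        rw [← e1]; abel
      have h2'' : φV (ρ y X) = ρ (α y) (φV X) + ρ (φL y) (β X) := by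
        rw [← e2]; abel
      rw [this, h2'']
      abel
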